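/- Let D be the uniform distribution on Λ = {x ∈ ℤ^d : 0 < ‖x‖_∞ ≤ L}. If ‖k‖ ≤ 1/L (Euclidean norm), then 1 − D̂(k) ≥ (2‖k‖²)/(dπ²) · (1/|Λ|)·Σ_{x∈Λ} ‖x‖², where D̂(k) = (1/|Λ|)Σ_{x∈Λ} cos(k·x). In particular 1 − D̂(k) ≥ c L² ‖k‖² for a constant c > 0 depending only on d. -/

import Mathlib

open Real

lemma sin_ge_sub_cube (x : ℝ) (hx : 0 ≤ x) : x - x ^ 3 / 6 ≤ Real.sin x := by
  have hmono : MonotoneOn (fun t : ℝ => Real.sin t - (t - t ^ 3 / 6)) (Set.Ici 0) := by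
    apply monotoneOn_of_hasDerivWithinAt_nonneg (f' := fun t => Real.cos t - (1 - t ^ 2 / 2))
      (convex_Ici 0)
    · apply Continuous.continuousOn; fun_prop
    · intro t _
      have h1 : HasDerivAt (fun t : ℝ => t - t ^ 3 / 6) (1 - 3 * t ^ 2 / 6) t := by
        simpa using ((hasDerivAt_id' t).fun_sub (((hasDerivAt_pow 3 t)).div_const 6))
      have h := (Real.hasDerivAt_sin t).sub h1
      have h2 : Real.cos t - (1 - t ^ 2 / 2) = Real.cos t - (1 - 3 * t ^ 2 / 6) := by ring
      rw [h2]
      exact h.hasDerivWithinAt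
    · intro t _
      simp only [sub_nonneg]
      exact Real.one_sub_sq_div_two_le_cos
  have := hmono (Set.self_mem_Ici) (Set.mem_Ici.2 hx) hx
  simpa using this

lemma cos_le_quartic (x : ℝ) : Real.cos x ≤ 1 - x ^ 2 / 2 + x ^ 4 / 24 := by
  wlog hx : 0 ≤ x with H
  · rw [show x^2 = (-x)^2 by ring, show x^4 = (-x)^4 by ring, ← Real.cos_neg x]
    exact H (-x) (by linarith)
  have hmono : MonotoneOn (fun t : ℝ => (1 - t ^ 2 / 2 + t ^ 4 / 24) - Real.cos t)
      (Set.Ici 0) := by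
    apply monotoneOn_of_hasDerivWithinAt_nonneg
      (f' := fun t => Real.sin t - (t - t ^ 3 / 6)) (convex_Ici 0)
    · apply Continuous.continuousOn; fun_prop
    · intro t _
      have h1 : HasDerivAt (fun t : ℝ => 1 - t ^ 2 / 2 + t ^ 4 / 24)
          (0 - 2 * t ^ 1 / 2 + 4 * t ^ 3 / 24) t := by
        exact (((hasDerivAt_const t (1:ℝ)).sub ((hasDerivAt_pow 2 t).div_const 2)).add
          ((hasDerivAt_pow 4 t).div_const 24))
      have h := h1.sub (Real.hasDerivAt_cos t)
      have h2 : Real.sin t - (t - t ^ 3 / 6) = 0 - 2 * t ^ 1 / 2 + 4 * t ^ 3 / 24 - (-Real.sin t) := by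
        ring
      rw [h2]
      exact h.hasDerivWithinAt
    · intro t ht
      have ht' : (0:ℝ) ≤ t := le_of_lt (by simpa using ht)
      simp only [sub_nonneg]
      exact sin_ge_sub_cube t ht'
  have := hmono (Set.self_mem_Ici) (Set.mem_Ici.2 hx) hx
  simp only [Real.cos_zero] at this
  linarith

lemma one_sub_cos_ge (x : ℝ) : x ^ 2 / 2 - x ^ 4 / 24 ≤ 1 - Real.cos x := by
  have := cos_le_quartic x
  linarith

lemma Icc_sq_sum (L : ℕ) : (∑ t ∈ Finset.Icc (-(L:ℤ)) L, t^2) * 3 = L*(L+1)*(2*L+1) := by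
  induction L with
  | zero => simp
  | succ n ih =>
    have h : Finset.Icc (-((n+1:ℕ):ℤ)) ((n+1:ℕ):ℤ)
        = insert (-((n:ℤ)+1)) (insert ((n:ℤ)+1) (Finset.Icc (-(n:ℤ)) n)) := by
      ext t; simp only [Finset.mem_Icc, Finset.mem_insert]; push_cast; omega
    rw [h, Finset.sum_insert (by simp only [Finset.mem_insert, Finset.mem_Icc]; omega),
      Finset.sum_insert (by simp only [Finset.mem_Icc]; omega)]
    push_cast
    push_cast at ih
    ring_nf
    ring_nf at ih
    linarith

lemma Icc_odd_sum (L : ℕ) (g : ℤ → ℝ) (hg : ∀ t, g (-t) = - g t) :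
    ∑ t ∈ Finset.Icc (-(L:ℤ)) L, g t = 0 := by
  have h : ∑ t ∈ Finset.Icc (-(L:ℤ)) L, g t = ∑ t ∈ Finset.Icc (-(L:ℤ)) L, - g t := by
    apply Finset.sum_nbij' (i := fun t => -t) (j := fun t => -t)
    · intro a ha; simp only [Finset.mem_Icc] at *; omega
    · intro a ha; simp only [Finset.mem_Icc] at *; omega
    · intro a _; ring
    · intro a _; ring
    · intro a _; rw [hg, neg_neg]
  rw [Finset.sum_neg_distrib] at h
  linarith

lemma sum_piFinset_succ {n : ℕ} (I : Finset ℤ) (f : (Fin (n+1) → ℤ) → ℝ) :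
    ∑ x ∈ Fintype.piFinset (fun _ : Fin (n+1) => I), f x
      = ∑ t ∈ I, ∑ y ∈ Fintype.piFinset (fun _ : Fin n => I), f (Fin.cons t y) := by
  rw [← Finset.sum_product']
  apply Finset.sum_nbij' (i := fun x => (x 0, Fin.tail x)) (j := fun p => Fin.cons p.1 p.2)
  · intro a ha
    simp only [Fintype.mem_piFinset] at ha
    simp only [Finset.mem_product, Fintype.mem_piFinset]
    exact ⟨ha 0, fun i => ha _⟩
  · intro p hp
    simp only [Finset.mem_product, Fintype.mem_piFinset] at hp
    simp only [Fintype.mem_piFinset]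
    intro i
    induction i using Fin.cases with
    | zero => simpa using hp.1
    | succ j => simpa using hp.2 j
  · intro a _; exact Fin.cons_self_tail a
  · intro p _; simp
  · intro a _; rw [Fin.cons_self_tail]

open Finset Fintype

noncomputable def muL (L : ℕ) : ℝ := (L:ℝ)*((L:ℝ)+1)/3

lemma muL_nonneg (L : ℕ) : 0 ≤ muL L := by unfold muL; positivity

lemma muL_le (L : ℕ) (hL : 1 ≤ L) : muL L ≤ (L:ℝ)^2 := by
  unfold muL
  have : (1:ℝ) ≤ L := by exact_mod_cast hL
  nlinarith

lemma le_muL (L : ℕ) : (L:ℝ)^2 ≤ 3 * muL L := by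
  unfold muL
  have : (0:ℝ) ≤ L := by positivity
  nlinarith

lemma Icc_sq_sum_real (L : ℕ) :
    ∑ t ∈ Finset.Icc (-(L:ℤ)) L, (t:ℝ)^2 = (2*(L:ℝ)+1) * muL L := by
  have h := Icc_sq_sum L
  have h2 : ∑ t ∈ Finset.Icc (-(L:ℤ)) L, (t:ℝ)^2
      = ((∑ t ∈ Finset.Icc (-(L:ℤ)) L, t^2 : ℤ) : ℝ) := by push_cast; ring_nf
  rw [h2]
  have h3 : ((∑ t ∈ Finset.Icc (-(L:ℤ)) L, t^2 : ℤ) : ℝ) * 3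
      = ((L:ℝ)*((L:ℝ)+1))*(2*(L:ℝ)+1) := by
    exact_mod_cast congrArg (Int.cast : ℤ → ℝ) h
  unfold muL
  linarith

lemma Icc_quartic_sum_real (L : ℕ) :
    ∑ t ∈ Finset.Icc (-(L:ℤ)) L, (t:ℝ)^4 ≤ (L:ℝ)^2 * ((2*(L:ℝ)+1) * muL L) := by
  rw [← Icc_sq_sum_real, Finset.mul_sum]
  apply Finset.sum_le_sum
  intro t ht
  simp only [Finset.mem_Icc] at ht
  have h1 : (t:ℝ)^2 ≤ (L:ℝ)^2 := by
    have ha : ((-L : ℤ) : ℝ) ≤ (t:ℝ) := by exact_mod_cast ht.1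
    have hb : (t:ℝ) ≤ ((L:ℤ):ℝ) := by exact_mod_cast ht.2
    push_cast at ha hb
    nlinarith
  nlinarith [sq_nonneg ((t:ℝ)^2)]

lemma Icc_lin_sum_real (L : ℕ) : ∑ t ∈ Finset.Icc (-(L:ℤ)) L, (t:ℝ) = 0 := by
  apply Icc_odd_sum L (fun t => (t:ℝ)); intro t; push_cast; ring

lemma Icc_cube_sum_real (L : ℕ) : ∑ t ∈ Finset.Icc (-(L:ℤ)) L, (t:ℝ)^3 = 0 := by
  apply Icc_odd_sum L (fun t => (t:ℝ)^3); intro t; push_cast; ring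

lemma card_box (L n : ℕ) :
    (((Fintype.piFinset (fun _ : Fin n => Finset.Icc (-(L:ℤ)) L)).card : ℝ))
      = (2*(L:ℝ)+1)^n := by
  rw [Fintype.card_piFinset_const]
  have : (Finset.Icc (-(L:ℤ)) L).card = 2*L+1 := by
    rw [Int.card_Icc]
    omega
  rw [this]
  push_cast
  ring

theorem box_moments (L : ℕ) (hL : 1 ≤ L) :
    ∀ (n : ℕ) (k : Fin n → ℝ),
    (∑ x ∈ Fintype.piFinset (fun _ : Fin n => Finset.Icc (-(L:ℤ)) L),
        ∑ i, k i * (x i : ℝ)) = 0 ∧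
    (∑ x ∈ Fintype.piFinset (fun _ : Fin n => Finset.Icc (-(L:ℤ)) L),
        (∑ i, k i * (x i : ℝ))^3) = 0 ∧
    (∑ x ∈ Fintype.piFinset (fun _ : Fin n => Finset.Icc (-(L:ℤ)) L),
        (∑ i, k i * (x i : ℝ))^2) = (2*(L:ℝ)+1)^n * muL L * (∑ i, (k i)^2) ∧
    (∑ x ∈ Fintype.piFinset (fun _ : Fin n => Finset.Icc (-(L:ℤ)) L),
        (∑ i, k i * (x i : ℝ))^4) ≤ 3 * (2*(L:ℝ)+1)^n * (muL L)^2 * (∑ i, (k i)^2)^2 ∧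
    (∑ x ∈ Fintype.piFinset (fun _ : Fin n => Finset.Icc (-(L:ℤ)) L),
        ∑ i, ((x i : ℝ))^2) = n * (2*(L:ℝ)+1)^(n-1) * ((2*(L:ℝ)+1) * muL L) := by
  intro n
  induction n with
  | zero =>
    intro k
    simp
  | succ n ih =>
    intro k
    set I := Finset.Icc (-(L:ℤ)) L with hI
    set N : ℝ := 2*(L:ℝ)+1 with hN
    obtain ⟨ih1, ih3, ih2, ih4, ihq⟩ := ih (fun i => k i.succ)
    set K' : ℝ := ∑ i : Fin n, (k i.succ)^2 with hK'
    set μ : ℝ := muL L with hμ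
    have hμ0 : 0 ≤ μ := muL_nonneg L
    have hcard : ∀ (m : ℕ), (((Fintype.piFinset (fun _ : Fin m => I)).card : ℝ)) = N^m :=
      fun m => card_box L m
    have hS : ∀ (t : ℤ) (y : Fin n → ℤ),
        (∑ i : Fin (n+1), k i * ((Fin.cons t y : Fin (n+1) → ℤ) i : ℝ))
          = k 0 * (t:ℝ) + ∑ i : Fin n, k i.succ * (y i : ℝ) := by
      intro t y
      rw [Fin.sum_univ_succ]
      simp
    have hKsum : (∑ i : Fin (n+1), (k i)^2) = (k 0)^2 + K' := by
      rw [Fin.sum_univ_succ]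
    have hN0 : (0:ℝ) < N := by rw [hN]; positivity
    -- inner sum helpers
    have inner1 : ∀ t : ℤ, ∑ y ∈ Fintype.piFinset (fun _ : Fin n => I),
        (k 0 * (t:ℝ) + ∑ i : Fin n, k i.succ * (y i : ℝ)) = N^n * (k 0 * (t:ℝ)) := by
      intro t
      rw [Finset.sum_add_distrib, Finset.sum_const, ih1, nsmul_eq_mul]
      rw [show (((Fintype.piFinset (fun _ : Fin n => I)).card : ℝ)) = N^n from hcard n]
      ring
    have inner2 : ∀ t : ℤ, ∑ y ∈ Fintype.piFinset (fun _ : Fin n => I),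
        (k 0 * (t:ℝ) + ∑ i : Fin n, k i.succ * (y i : ℝ))^2
          = N^n * (k 0 * (t:ℝ))^2 + N^n * μ * K' := by
      intro t
      have hexp : ∀ y ∈ Fintype.piFinset (fun _ : Fin n => I),
          (k 0 * (t:ℝ) + ∑ i : Fin n, k i.succ * (y i : ℝ))^2
            = (k 0 * (t:ℝ))^2 + (2 * (k 0 * (t:ℝ))) * (∑ i : Fin n, k i.succ * (y i : ℝ))
              + (∑ i : Fin n, k i.succ * (y i : ℝ))^2 := by
        intro y _; ring
      rw [Finset.sum_congr rfl hexp, Finset.sum_add_distrib, Finset.sum_add_distrib,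
        Finset.sum_const, ← Finset.mul_sum, ih1, ih2, nsmul_eq_mul, hcard n]
      ring
    have inner3 : ∀ t : ℤ, ∑ y ∈ Fintype.piFinset (fun _ : Fin n => I),
        (k 0 * (t:ℝ) + ∑ i : Fin n, k i.succ * (y i : ℝ))^3
          = N^n * (k 0 * (t:ℝ))^3 + 3 * (k 0 * (t:ℝ)) * (N^n * μ * K') := by
      intro t
      have hexp : ∀ y ∈ Fintype.piFinset (fun _ : Fin n => I),
          (k 0 * (t:ℝ) + ∑ i : Fin n, k i.succ * (y i : ℝ))^3
            = (k 0 * (t:ℝ))^3 + (3 * (k 0 * (t:ℝ))^2) * (∑ i : Fin n, k i.succ * (y i : ℝ))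
              + (3 * (k 0 * (t:ℝ))) * (∑ i : Fin n, k i.succ * (y i : ℝ))^2
              + (∑ i : Fin n, k i.succ * (y i : ℝ))^3 := by
        intro y _; ring
      rw [Finset.sum_congr rfl hexp, Finset.sum_add_distrib, Finset.sum_add_distrib,
        Finset.sum_add_distrib, Finset.sum_const, ← Finset.mul_sum, ← Finset.mul_sum,
        ih1, ih2, ih3, nsmul_eq_mul, hcard n]
      ring
    have inner4 : ∀ t : ℤ, ∑ y ∈ Fintype.piFinset (fun _ : Fin n => I),
        (k 0 * (t:ℝ) + ∑ i : Fin n, k i.succ * (y i : ℝ))^4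
          ≤ N^n * (k 0 * (t:ℝ))^4 + 6 * (k 0 * (t:ℝ))^2 * (N^n * μ * K')
            + 3 * N^n * μ^2 * K'^2 := by
      intro t
      have hexp : ∀ y ∈ Fintype.piFinset (fun _ : Fin n => I),
          (k 0 * (t:ℝ) + ∑ i : Fin n, k i.succ * (y i : ℝ))^4
            = (k 0 * (t:ℝ))^4 + (4 * (k 0 * (t:ℝ))^3) * (∑ i : Fin n, k i.succ * (y i : ℝ))
              + (6 * (k 0 * (t:ℝ))^2) * (∑ i : Fin n, k i.succ * (y i : ℝ))^2
              + (4 * (k 0 * (t:ℝ))) * (∑ i : Fin n, k i.succ * (y i : ℝ))^3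
              + (∑ i : Fin n, k i.succ * (y i : ℝ))^4 := by
        intro y _; ring
      rw [Finset.sum_congr rfl hexp, Finset.sum_add_distrib, Finset.sum_add_distrib,
        Finset.sum_add_distrib, Finset.sum_add_distrib, Finset.sum_const,
        ← Finset.mul_sum, ← Finset.mul_sum, ← Finset.mul_sum,
        ih1, ih2, ih3, nsmul_eq_mul, hcard n]
      have := ih4
      nlinarith [ih4]
    refine ⟨?_, ?_, ?_, ?_, ?_⟩
    · -- first moment
      rw [sum_piFinset_succ]
      have : ∀ t ∈ I, (∑ y ∈ Fintype.piFinset (fun _ : Fin n => I),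
          ∑ i : Fin (n+1), k i * ((Fin.cons t y : Fin (n+1) → ℤ) i : ℝ))
            = N^n * (k 0 * (t:ℝ)) := by
        intro t _
        rw [Finset.sum_congr rfl (fun y _ => hS t y)]
        exact inner1 t
      rw [Finset.sum_congr rfl this, ← Finset.mul_sum, ← Finset.mul_sum, Icc_lin_sum_real]
      ring
    · -- third moment
      rw [sum_piFinset_succ]
      have : ∀ t ∈ I, (∑ y ∈ Fintype.piFinset (fun _ : Fin n => I),
          (∑ i : Fin (n+1), k i * ((Fin.cons t y : Fin (n+1) → ℤ) i : ℝ))^3)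
            = N^n * (k 0)^3 * (t:ℝ)^3 + (3 * k 0 * N^n * μ * K') * (t:ℝ) := by
        intro t _
        rw [Finset.sum_congr rfl (fun y _ => by rw [hS t y])]
        rw [inner3 t]; ring
      rw [Finset.sum_congr rfl this, Finset.sum_add_distrib, ← Finset.mul_sum,
        ← Finset.mul_sum, Icc_lin_sum_real, Icc_cube_sum_real]
      ring
    · -- second moment
      rw [sum_piFinset_succ]
      have : ∀ t ∈ I, (∑ y ∈ Fintype.piFinset (fun _ : Fin n => I),
          (∑ i : Fin (n+1), k i * ((Fin.cons t y : Fin (n+1) → ℤ) i : ℝ))^2)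
            = (N^n * (k 0)^2) * (t:ℝ)^2 + N^n * μ * K' := by
        intro t _
        rw [Finset.sum_congr rfl (fun y _ => by rw [hS t y])]
        rw [inner2 t]; ring
      rw [Finset.sum_congr rfl this, Finset.sum_add_distrib, ← Finset.mul_sum,
        Finset.sum_const, nsmul_eq_mul, Icc_sq_sum_real, hKsum]
      have hIcard : ((I.card : ℝ)) = N := by
        have := hcard 1
        rw [pow_one] at this
        rw [← this, Fintype.card_piFinset_const, pow_one]
      rw [hIcard]
      push_cast
      ring
    · -- fourth moment
      rw [sum_piFinset_succ]
      have hb : ∀ t ∈ I, (∑ y ∈ Fintype.piFinset (fun _ : Fin n => I),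
          (∑ i : Fin (n+1), k i * ((Fin.cons t y : Fin (n+1) → ℤ) i : ℝ))^4)
            ≤ (N^n * (k 0)^4) * (t:ℝ)^4 + (6 * (k 0)^2 * N^n * μ * K') * (t:ℝ)^2
              + 3 * N^n * μ^2 * K'^2 := by
        intro t _
        rw [Finset.sum_congr rfl (fun y _ => by rw [hS t y])]
        calc _ ≤ _ := inner4 t
        _ = _ := by ring
      calc ∑ t ∈ I, ∑ y ∈ Fintype.piFinset (fun _ : Fin n => I),
            (∑ i : Fin (n+1), k i * ((Fin.cons t y : Fin (n+1) → ℤ) i : ℝ))^4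
          ≤ ∑ t ∈ I, ((N^n * (k 0)^4) * (t:ℝ)^4 + (6 * (k 0)^2 * N^n * μ * K') * (t:ℝ)^2
              + 3 * N^n * μ^2 * K'^2) := Finset.sum_le_sum hb
        _ = (N^n * (k 0)^4) * (∑ t ∈ I, (t:ℝ)^4)
            + (6 * (k 0)^2 * N^n * μ * K') * (∑ t ∈ I, (t:ℝ)^2)
            + I.card * (3 * N^n * μ^2 * K'^2) := by
          rw [Finset.sum_add_distrib, Finset.sum_add_distrib, ← Finset.mul_sum,
            ← Finset.mul_sum, Finset.sum_const, nsmul_eq_mul]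
        _ ≤ 3 * N^(n+1) * μ^2 * (∑ i : Fin (n+1), (k i)^2)^2 := by
          have hIcard : ((I.card : ℝ)) = N := by
            have := hcard 1
            rw [pow_one] at this
            rw [← this, Fintype.card_piFinset_const, pow_one]
          rw [hIcard, hKsum, Icc_sq_sum_real, ← hN, ← hμ]
          have h4 := Icc_quartic_sum_real L
          have hL3 := le_muL L
          have e1 : (N^n * (k 0)^4) * (∑ t ∈ I, (t:ℝ)^4)
              ≤ N^n * (k 0)^4 * ((L:ℝ)^2 * (N * μ)) := by
            apply mul_le_mul_of_nonneg_left _ (by positivity)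
            rw [hN, hμ]; exact h4
          have e2 : N^n * (k 0)^4 * ((L:ℝ)^2 * (N * μ)) ≤ N^n * (k 0)^4 * (3 * μ * (N * μ)) := by
            apply mul_le_mul_of_nonneg_left _ (by positivity)
            apply mul_le_mul_of_nonneg_right _ ?_
            · rw [hμ]; exact hL3
            · positivity
          calc (N^n * (k 0)^4) * (∑ t ∈ I, (t:ℝ)^4)
                + (6 * (k 0)^2 * N^n * μ * K') * (N * μ) + N * (3 * N^n * μ^2 * K'^2)
              ≤ N^n * (k 0)^4 * (3 * μ * (N * μ))
                + (6 * (k 0)^2 * N^n * μ * K') * (N * μ) + N * (3 * N^n * μ^2 * K'^2) := by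
                linarith [e1.trans e2]
            _ = 3 * N^(n+1) * μ^2 * ((k 0)^2 + K')^2 := by rw [pow_succ]; ring
    · -- coordinate squares
      rw [sum_piFinset_succ]
      have : ∀ t ∈ I, (∑ y ∈ Fintype.piFinset (fun _ : Fin n => I),
          ∑ i : Fin (n+1), (((Fin.cons t y : Fin (n+1) → ℤ) i : ℝ))^2)
            = N^n * (t:ℝ)^2 + (n * N^(n-1) * (N * μ)) := by
        intro t _
        have hQ : ∀ y ∈ Fintype.piFinset (fun _ : Fin n => I),
            (∑ i : Fin (n+1), (((Fin.cons t y : Fin (n+1) → ℤ) i : ℝ))^2)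
              = (t:ℝ)^2 + ∑ i : Fin n, ((y i : ℝ))^2 := by
          intro y _
          rw [Fin.sum_univ_succ]
          simp
        rw [Finset.sum_congr rfl hQ, Finset.sum_add_distrib, Finset.sum_const, ihq,
          nsmul_eq_mul, hcard n]
      rw [Finset.sum_congr rfl this, Finset.sum_add_distrib, ← Finset.mul_sum,
        Finset.sum_const, nsmul_eq_mul, Icc_sq_sum_real]
      have hIcard : ((I.card : ℝ)) = N := by
        have := hcard 1
        rw [pow_one] at this
        rw [← this, Fintype.card_piFinset_const, pow_one]
      rw [hIcard]
      have hpow : N^(n+1-1) = N^n := by norm_num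
      rw [hpow]
      rcases n with _ | m
      · push_cast; ring
      · have hpow2 : N^(m+1-1) = N^m := by norm_num
        rw [hpow2]
        push_cast
        ring

/-- The spread-out set `Λ = {x ∈ ℤ^d : 0 < ‖x‖_∞ ≤ L}`, as a finset. -/
noncomputable def spreadOutBox (d L : ℕ) : Finset (Fin d → ℤ) :=
  (Fintype.piFinset fun _ => Finset.Icc (-(L : ℤ)) (L : ℤ)).filter (fun x => x ≠ 0)

theorem one_sub_Dhat_lower_bound (d : ℕ) (hd : 1 ≤ d) :
    ∃ c : ℝ, 0 < c ∧ ∀ L : ℕ, 1 ≤ L → ∀ k : EuclideanSpace ℝ (Fin d), ‖k‖ ≤ 1 / (L : ℝ) →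
      (1 - ((spreadOutBox d L).card : ℝ)⁻¹ *
          ∑ x ∈ spreadOutBox d L, Real.cos (∑ i, k i * (x i : ℝ))
        ≥ (2 * ‖k‖ ^ 2) / ((d : ℝ) * Real.pi ^ 2) *
          (((spreadOutBox d L).card : ℝ)⁻¹ * ∑ x ∈ spreadOutBox d L, ∑ i, (x i : ℝ) ^ 2)) ∧
      (1 - ((spreadOutBox d L).card : ℝ)⁻¹ *
          ∑ x ∈ spreadOutBox d L, Real.cos (∑ i, k i * (x i : ℝ))
        ≥ c * (L : ℝ) ^ 2 * ‖k‖ ^ 2) := by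
  refine ⟨2 / (3 * Real.pi ^ 2), by positivity, ?_⟩
  intro L hL k hk
  set I : Finset ℤ := Finset.Icc (-(L:ℤ)) L with hIdef
  set B : Finset (Fin d → ℤ) := Fintype.piFinset (fun _ : Fin d => I) with hBdef
  have hΛ : spreadOutBox d L = B.erase 0 := by
    unfold spreadOutBox
    rw [Finset.filter_ne']
  have h0B : (0 : Fin d → ℤ) ∈ B := by
    simp only [hBdef, Fintype.mem_piFinset]
    intro i
    simp only [hIdef, Finset.mem_Icc, Pi.zero_apply]
    omega
  set P : ℝ := 2*(L:ℝ)+1 with hPdef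
  have hP1 : 1 < P := by
    have : (1:ℝ) ≤ L := by exact_mod_cast hL
    rw [hPdef]; linarith
  have hBcard : ((B.card : ℝ)) = P^d := card_box L d
  have hBpos : 0 < B.card := Finset.card_pos.mpr ⟨0, h0B⟩
  have hcardΛ : (((spreadOutBox d L).card : ℝ)) = P^d - 1 := by
    rw [hΛ, Finset.card_erase_of_mem h0B, Nat.cast_sub hBpos, hBcard, Nat.cast_one]
  have hΛpos : (0:ℝ) < ((spreadOutBox d L).card : ℝ) := by
    rw [hcardΛ]
    have : 1 < P^d := one_lt_pow₀ hP1 (by omega)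
    linarith
  obtain ⟨m1, m3, m2, m4, mq⟩ := box_moments L hL d (fun i => k i)
  set μ : ℝ := muL L with hμdef
  have hμ0 : 0 ≤ μ := muL_nonneg L
  set K : ℝ := ∑ i, (k i)^2 with hKdef
  have hnormK : ‖k‖^2 = K := by
    rw [EuclideanSpace.norm_eq, Real.sq_sqrt (Finset.sum_nonneg fun i _ => by positivity)]
    simp [Real.norm_eq_abs, sq_abs]
    exact hKdef.symm
  have hK0 : 0 ≤ K := Finset.sum_nonneg fun i _ => sq_nonneg _
  have hKle : K ≤ 1/(L:ℝ)^2 := by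
    have h := pow_le_pow_left₀ (norm_nonneg k) hk 2
    rw [hnormK] at h
    calc K ≤ (1/(L:ℝ))^2 := h
      _ = 1/(L:ℝ)^2 := by ring
  have hL0 : (0:ℝ) < L := by exact_mod_cast hL
  have hμK : μ * K ≤ 1 := by
    have h1 : μ * K ≤ (L:ℝ)^2 * (1/(L:ℝ)^2) :=
      mul_le_mul (muL_le L hL) hKle hK0 (by positivity)
    have h2 : (L:ℝ)^2 * (1/(L:ℝ)^2) = 1 := by field_simp
    linarith
  -- sums over Λ extend to B for functions vanishing at 0
  have hzero_t : (∑ i, k i * ((0 : Fin d → ℤ) i : ℝ)) = 0 := by simp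
  have hS2 : ∑ x ∈ B, (∑ i, k i * (x i : ℝ))^2 = P^d * μ * K := m2
  have hS2nonneg : 0 ≤ ∑ x ∈ B, (∑ i, k i * (x i : ℝ))^2 :=
    Finset.sum_nonneg fun x _ => sq_nonneg _
  have hS4 : ∑ x ∈ B, (∑ i, k i * (x i : ℝ))^4 ≤ 3 * (∑ x ∈ B, (∑ i, k i * (x i : ℝ))^2) := by
    calc ∑ x ∈ B, (∑ i, k i * (x i : ℝ))^4 ≤ 3 * P^d * μ^2 * K^2 := m4
      _ = (P^d * μ * K) * (3 * (μ * K)) := by ring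
      _ ≤ (P^d * μ * K) * (3 * 1) := by
          apply mul_le_mul_of_nonneg_left _ (by rw [← hS2]; exact hS2nonneg)
          linarith
      _ = 3 * (∑ x ∈ B, (∑ i, k i * (x i : ℝ))^2) := by rw [hS2]; ring
  -- the key lower bound on the sum of 1 - cos
  have hkey : ∑ x ∈ spreadOutBox d L, (1 - Real.cos (∑ i, k i * (x i : ℝ)))
      ≥ (2 / Real.pi^2) * ∑ x ∈ B, (∑ i, k i * (x i : ℝ))^2 := by
    have h1 : ∑ x ∈ spreadOutBox d L, (1 - Real.cos (∑ i, k i * (x i : ℝ)))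
        ≥ ∑ x ∈ spreadOutBox d L,
            ((∑ i, k i * (x i : ℝ))^2/2 - (∑ i, k i * (x i : ℝ))^4/24) :=
      Finset.sum_le_sum fun x _ => one_sub_cos_ge _
    have h2 : ∑ x ∈ spreadOutBox d L,
          ((∑ i, k i * (x i : ℝ))^2/2 - (∑ i, k i * (x i : ℝ))^4/24)
        = ∑ x ∈ B, ((∑ i, k i * (x i : ℝ))^2/2 - (∑ i, k i * (x i : ℝ))^4/24) := by
      rw [hΛ]
      apply Finset.sum_erase
      rw [hzero_t]
      norm_num
    have h3 : ∑ x ∈ B, ((∑ i, k i * (x i : ℝ))^2/2 - (∑ i, k i * (x i : ℝ))^4/24)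
        = (∑ x ∈ B, (∑ i, k i * (x i : ℝ))^2)/2 - (∑ x ∈ B, (∑ i, k i * (x i : ℝ))^4)/24 := by
      rw [Finset.sum_sub_distrib, Finset.sum_div, Finset.sum_div]
    have hpi : (3:ℝ) < Real.pi := Real.pi_gt_three
    have hpisq : (9:ℝ) ≤ Real.pi^2 := by nlinarith
    have h38 : (2 / Real.pi^2) ≤ 3/8 := by
      rw [div_le_div_iff₀ (by positivity) (by norm_num)]
      linarith
    have hmul : (2 / Real.pi^2) * (∑ x ∈ B, (∑ i, k i * (x i : ℝ))^2)
        ≤ (3/8) * (∑ x ∈ B, (∑ i, k i * (x i : ℝ))^2) :=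
      mul_le_mul_of_nonneg_right h38 hS2nonneg
    linarith [h1, h2.symm ▸ h1]
  -- rewrite the LHS
  have hLHS : 1 - ((spreadOutBox d L).card : ℝ)⁻¹ *
      ∑ x ∈ spreadOutBox d L, Real.cos (∑ i, k i * (x i : ℝ))
      = ((spreadOutBox d L).card : ℝ)⁻¹ *
        ∑ x ∈ spreadOutBox d L, (1 - Real.cos (∑ i, k i * (x i : ℝ))) := by
    rw [Finset.sum_sub_distrib, Finset.sum_const, nsmul_eq_mul, mul_one]
    field_simp
  -- the sum of squares over Λ
  have hQ : ∑ x ∈ spreadOutBox d L, ∑ i, ((x i : ℝ))^2 = (d:ℝ) * P^d * μ := by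
    have hext : ∑ x ∈ spreadOutBox d L, ∑ i, ((x i : ℝ))^2
        = ∑ x ∈ B, ∑ i, ((x i : ℝ))^2 := by
      rw [hΛ]
      apply Finset.sum_erase
      simp
    rw [hext, mq]
    have hd1 : d - 1 + 1 = d := by omega
    calc (d:ℝ) * P^(d-1) * (P * μ) = (d:ℝ) * (P^(d-1) * P) * μ := by ring
      _ = (d:ℝ) * P^d * μ := by rw [← pow_succ, hd1]
  have hdpos : (0:ℝ) < d := by exact_mod_cast hd
  have hpipos : (0:ℝ) < Real.pi := Real.pi_pos
  constructor
  · -- first inequality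
    rw [hLHS, hnormK, hQ]
    have hgen : ∀ A : ℝ, (2 * K) / ((d : ℝ) * Real.pi ^ 2) * (A * ((d:ℝ) * P^d * μ))
        = A * ((2 / Real.pi^2) * (P^d * μ * K)) := by
      intro A
      rw [div_eq_mul_inv, mul_inv, ← mul_assoc]
      have hd0 : (d:ℝ) ≠ 0 := hdpos.ne'
      field_simp
    have hRHS : (2 * K) / ((d : ℝ) * Real.pi ^ 2) *
        (((spreadOutBox d L).card : ℝ)⁻¹ * ((d:ℝ) * P^d * μ))
        = ((spreadOutBox d L).card : ℝ)⁻¹ * ((2 / Real.pi^2) * (P^d * μ * K)) :=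
      hgen _
    rw [hRHS]
    apply mul_le_mul_of_nonneg_left _ (inv_nonneg.mpr hΛpos.le)
    rw [← hS2]
    exact hkey
  · -- second inequality
    rw [hLHS, hnormK]
    have step1 : ((spreadOutBox d L).card : ℝ)⁻¹ *
        ∑ x ∈ spreadOutBox d L, (1 - Real.cos (∑ i, k i * (x i : ℝ)))
        ≥ ((spreadOutBox d L).card : ℝ)⁻¹ * ((2 / Real.pi^2) * (P^d * μ * K)) := by
      apply mul_le_mul_of_nonneg_left _ (inv_nonneg.mpr hΛpos.le)
      rw [← hS2]
      exact hkey
    have hfrac : (1:ℝ) ≤ ((spreadOutBox d L).card : ℝ)⁻¹ * P^d := by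
      rw [le_inv_mul_iff₀ hΛpos, mul_one, hcardΛ]
      linarith
    have step2 : ((spreadOutBox d L).card : ℝ)⁻¹ * ((2 / Real.pi^2) * (P^d * μ * K))
        ≥ (2 / Real.pi^2) * (μ * K) := by
      have e : ((spreadOutBox d L).card : ℝ)⁻¹ * ((2 / Real.pi^2) * (P^d * μ * K))
          = (((spreadOutBox d L).card : ℝ)⁻¹ * P^d) * ((2 / Real.pi^2) * (μ * K)) := by ring
      rw [e]
      have h2 : 0 ≤ (2 / Real.pi^2) * (μ * K) :=
        mul_nonneg (div_nonneg (by norm_num) (sq_nonneg _)) (mul_nonneg hμ0 hK0)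
      exact le_mul_of_one_le_left h2 hfrac
    have step3 : (2 / Real.pi^2) * (μ * K) ≥ 2 / (3 * Real.pi ^ 2) * (L:ℝ)^2 * K := by
      have hμL2 : (L:ℝ)^2/3 ≤ μ := by
        have := le_muL L
        linarith
      have e : 2 / (3 * Real.pi ^ 2) * (L:ℝ)^2 * K = (2 / Real.pi^2) * (((L:ℝ)^2/3) * K) := by
        ring
      rw [e]
      apply mul_le_mul_of_nonneg_left _ (div_nonneg (by norm_num) (sq_nonneg _))
      exact mul_le_mul_of_nonneg_right hμL2 hK0
    exact ge_trans step1 (ge_trans step2 step3)
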